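/- Let A = diag(a_1,...,a_n) with pairwise distinct entries and λ ∈ K. Then the set {[A,B][A,C] + λ[A,C][A,B] : B, C ∈ UT_n} contains all of UT_n^{(1)}. -/

import Mathlib

/-!
Every strictly upper triangular matrix is a commutator `[A, B]` with `B` upper triangular
(divide the `(i, j)` entry by `a i - a j`). So it suffices to write `M` as `D N + λ N D` with
`D` strictly upper triangular, where `N` is the nilpotent Jordan block. Entrywise this reads
`D i (j - 1) + λ D (i + 1) j = M i j`, which is solved by the finite geometric series
`D i k = ∑ₜ (-λ)ᵗ M (i + t) (k + t + 1)`.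
-/

open Matrix Finset Function

theorem exists_upperTriangular_commutator_diagonal_eq {ι K : Type*} [Fintype ι] [DecidableEq ι]
    [Preorder ι] [Field K] {a : ι → K} (ha : Injective a) {D : Matrix ι ι K}
    (hD : ∀ i j, ¬ i < j → D i j = 0) :
    ∃ B : Matrix ι ι K, (∀ i j, j < i → B i j = 0) ∧ diagonal a * B - B * diagonal a = D := by
  refine ⟨of fun i j => (a i - a j)⁻¹ * D i j, fun i j hji => ?_, ?_⟩
  · simp [hD i j (lt_asymm hji)]
  · ext i j
    simp only [Matrix.sub_apply, diagonal_mul, mul_diagonal, of_apply]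
    rcases eq_or_ne i j with rfl | hij
    · simp [hD i i (lt_irrefl i)]
    · have : a i - a j ≠ 0 := sub_ne_zero.mpr (ha.ne hij)
      field_simp

section Shift

variable {K : Type*} [Semiring K] {n : ℕ}

def jordanShift (n : ℕ) (K : Type*) [Zero K] [One K] : Matrix (Fin n) (Fin n) K :=
  of fun i j => if (i : ℕ) + 1 = j then 1 else 0

theorem jordanShift_eq_zero_of_not_lt {i j : Fin n} (h : ¬ i < j) : jordanShift n K i j = 0 :=
  if_neg fun h' => h (Fin.lt_def.mpr (by omega))

theorem mul_jordanShift_apply_of_eq_zero (D : Matrix (Fin n) (Fin n) K) {i j : Fin n}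
    (hj : (j : ℕ) = 0) : (D * jordanShift n K) i j = 0 := by
  rw [mul_apply]
  refine sum_eq_zero fun k _ => ?_
  simp [jordanShift, show (k : ℕ) + 1 ≠ j by omega]

theorem mul_jordanShift_apply_of_eq_succ (d : ℕ → ℕ → K) {i j : Fin n} {k : ℕ}
    (hj : (j : ℕ) = k + 1) : (of (fun p q : Fin n => d p q) * jordanShift n K) i j = d i k := by
  rw [mul_apply, sum_eq_single ⟨k, by omega⟩]
  · simp [jordanShift, hj]
  · intro l _ hl
    simp [jordanShift, show (l : ℕ) + 1 ≠ j from fun h => hl (Fin.ext (by simp; omega))]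
  · simp

theorem jordanShift_mul_apply (d : ℕ → ℕ → K) (hd : ∀ q, d n q = 0) (i j : Fin n) :
    (jordanShift n K * of (fun p q : Fin n => d p q)) i j = d (i + 1) j := by
  by_cases hi : (i : ℕ) + 1 < n
  · rw [mul_apply, sum_eq_single ⟨i + 1, hi⟩]
    · simp [jordanShift]
    · intro l _ hl
      simp [jordanShift, show (i : ℕ) + 1 ≠ l from fun h => hl (Fin.ext (by simp; omega))]
    · simp
  · rw [show (i : ℕ) + 1 = n by omega, hd, mul_apply]
    refine sum_eq_zero fun l _ => ?_
    simp [jordanShift, show (i : ℕ) + 1 ≠ l by omega]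

end Shift

section GeometricSolution

variable {K : Type*} [CommRing K]

/-- Solves `d p q + λ d (p + 1) (q + 1) = m p (q + 1)` for `m` vanishing in rows `p ≥ n`. -/
def shiftSolve (lam : K) (n : ℕ) (m : ℕ → ℕ → K) (p q : ℕ) : K :=
  ∑ t ∈ range n, (-lam) ^ t * m (p + t) (q + t + 1)

variable {lam : K} {n : ℕ} {m : ℕ → ℕ → K}

theorem shiftSolve_add_mul_shiftSolve (hm : ∀ p q, n ≤ p → m p q = 0) (p q : ℕ) :
    shiftSolve lam n m p q + lam * shiftSolve lam n m (p + 1) (q + 1) = m p (q + 1) := by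
  set g : ℕ → K := fun t => (-lam) ^ t * m (p + t) (q + t + 1)
  have hshift : lam * shiftSolve lam n m (p + 1) (q + 1) = -∑ t ∈ range n, g (t + 1) := by
    rw [shiftSolve, mul_sum, ← sum_neg_distrib]
    refine sum_congr rfl fun t _ => ?_
    simp only [g, pow_succ, show p + (t + 1) = p + 1 + t by ring,
      show q + (t + 1) + 1 = q + 1 + t + 1 by ring]
    ring
  have htel : ∑ t ∈ range n, (g t - g (t + 1)) = g 0 - g n := sum_range_sub' g n
  have hgn : g n = 0 := by simp [g, hm (p + n) _ (by omega)]
  rw [hshift, shiftSolve, ← sub_eq_add_neg, ← sum_sub_distrib]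
  simpa [g, hgn] using htel

theorem shiftSolve_of_le (hm : ∀ p q, n ≤ p → m p q = 0) {p : ℕ} (hp : n ≤ p) (q : ℕ) :
    shiftSolve lam n m p q = 0 :=
  sum_eq_zero fun t _ => by rw [hm _ _ (by omega), mul_zero]

theorem shiftSolve_of_le_of_le (hm : ∀ p q, q ≤ p + 1 → m p q = 0) {p q : ℕ} (hqp : q ≤ p) :
    shiftSolve lam n m p q = 0 :=
  sum_eq_zero fun t _ => by rw [hm _ _ (by omega), mul_zero]

end GeometricSolution

section ExtendByZero

variable {K : Type*} [Zero K] {n : ℕ}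

def extendByZero (M : Matrix (Fin n) (Fin n) K) (p q : ℕ) : K :=
  if h : p < n ∧ q < n then M ⟨p, h.1⟩ ⟨q, h.2⟩ else 0

@[simp]
theorem extendByZero_apply (M : Matrix (Fin n) (Fin n) K) (i j : Fin n) :
    extendByZero M i j = M i j := by
  simp [extendByZero]

theorem extendByZero_of_le (M : Matrix (Fin n) (Fin n) K) {p : ℕ} (hp : n ≤ p) (q : ℕ) :
    extendByZero M p q = 0 :=
  dif_neg fun h => by omega

theorem extendByZero_of_le_succ {M : Matrix (Fin n) (Fin n) K}
    (hM : ∀ i j : Fin n, (j : ℕ) ≤ i + 1 → M i j = 0) {p q : ℕ} (hqp : q ≤ p + 1) :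
    extendByZero M p q = 0 := by
  unfold extendByZero
  split_ifs with h
  · exact hM _ _ hqp
  · rfl

end ExtendByZero

theorem exists_mul_jordanShift_add_smul_jordanShift_mul_eq {K : Type*} [CommRing K] {n : ℕ}
    (lam : K) {M : Matrix (Fin n) (Fin n) K} (hM : ∀ i j : Fin n, (j : ℕ) ≤ i + 1 → M i j = 0) :
    ∃ D : Matrix (Fin n) (Fin n) K, (∀ i j, ¬ i < j → D i j = 0) ∧
      D * jordanShift n K + lam • (jordanShift n K * D) = M := by
  have hrow : ∀ p q, n ≤ p → extendByZero M p q = 0 := fun p q hp => extendByZero_of_le M hp q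
  have hdiag : ∀ p q, q ≤ p → shiftSolve lam n (extendByZero M) p q = 0 :=
    fun p q => shiftSolve_of_le_of_le fun p q => extendByZero_of_le_succ hM
  refine ⟨of fun p q : Fin n => shiftSolve lam n (extendByZero M) p q,
    fun i j hij => hdiag _ _ (by omega), ?_⟩
  ext i j
  rw [Matrix.add_apply, Matrix.smul_apply, smul_eq_mul,
    jordanShift_mul_apply _ fun q => shiftSolve_of_le hrow le_rfl q]
  obtain hj | ⟨k, hk⟩ := (j : ℕ).eq_zero_or_pos.imp_right Nat.exists_eq_add_one.mpr
  · rw [mul_jordanShift_apply_of_eq_zero _ hj, hdiag _ _ (by omega), hM i j (by omega), mul_zero,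
      add_zero]
  · rw [mul_jordanShift_apply_of_eq_succ _ hk, hk, shiftSolve_add_mul_shiftSolve hrow, ← hk,
      extendByZero_apply]

theorem stmt17_general {K : Type*} [Field K] {n : ℕ}
    (a : Fin n → K) (ha : Function.Injective a) (lam : K) :
    {M : Matrix (Fin n) (Fin n) K | ∀ i j : Fin n, (j : ℤ) - (i : ℤ) ≤ 1 → M i j = 0} ⊆
    {M : Matrix (Fin n) (Fin n) K | ∃ B C : Matrix (Fin n) (Fin n) K,
        (∀ i j : Fin n, j < i → B i j = 0) ∧ (∀ i j : Fin n, j < i → C i j = 0) ∧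
        M = (Matrix.diagonal a * B - B * Matrix.diagonal a)
              * (Matrix.diagonal a * C - C * Matrix.diagonal a)
          + lam • ((Matrix.diagonal a * C - C * Matrix.diagonal a)
              * (Matrix.diagonal a * B - B * Matrix.diagonal a))} := by
  intro M hM
  obtain ⟨D, hD, hDM⟩ :=
    exists_mul_jordanShift_add_smul_jordanShift_mul_eq lam (M := M) fun i j h => hM i j (by omega)
  obtain ⟨B, hB, rfl⟩ := exists_upperTriangular_commutator_diagonal_eq ha hD
  obtain ⟨C, hC, hCN⟩ := exists_upperTriangular_commutator_diagonal_eq ha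
    (D := jordanShift n K) fun i j => jordanShift_eq_zero_of_not_lt
  exact ⟨B, C, hB, hC, by rw [hCN, hDM]⟩

/-- For `A = diag(a_1, …, a_n)` with pairwise distinct entries and `λ ∈ K`,
the set `{[A,B][A,C] + λ[A,C][A,B] : B, C ∈ UT_n}` contains all of `UT_n^{(1)}`. -/
theorem stmt17 {K : Type*} [Field K] {n : ℕ} (hn : 2 ≤ n)
    (a : Fin n → K) (ha : Function.Injective a) (lam : K) :
    {M : Matrix (Fin n) (Fin n) K | ∀ i j : Fin n, (j : ℤ) - (i : ℤ) ≤ 1 → M i j = 0} ⊆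
    {M : Matrix (Fin n) (Fin n) K | ∃ B C : Matrix (Fin n) (Fin n) K,
        (∀ i j : Fin n, j < i → B i j = 0) ∧ (∀ i j : Fin n, j < i → C i j = 0) ∧
        M = (Matrix.diagonal a * B - B * Matrix.diagonal a)
              * (Matrix.diagonal a * C - C * Matrix.diagonal a)
          + lam • ((Matrix.diagonal a * C - C * Matrix.diagonal a)
              * (Matrix.diagonal a * B - B * Matrix.diagonal a))} :=
  stmt17_general a ha lam
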